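/- There exists an absolute constant c ≥ 1 such that for every dimension d ≥ 2, all centrally symmetric convex bodies C, D ⊆ ℝ^d, every α > 0, and every set U ⊆ D°, with C₊ := C + α·D one has N_{(C₊)°}(U, α) ≤ c^{d} · N_{C°}(U, α), where N_A(U,α) denotes the translative covering number of U by translates of α·A. -/

import Mathlib

open Set MeasureTheory Metric
open scoped Pointwise RealInnerProductSpace ENNReal

noncomputable section

abbrev Euc (d : ℕ) := EuclideanSpace ℝ (Fin d)

/-- A convex body: a compact convex set with nonempty interior. -/
def IsConvexBody {d : ℕ} (K : Set (Euc d)) : Prop :=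
  IsCompact K ∧ Convex ℝ K ∧ (interior K).Nonempty

/-- The polar of a set. -/
def polarSet {d : ℕ} (S : Set (Euc d)) : Set (Euc d) :=
  {y | ∀ x ∈ S, ⟪x, y⟫ ≤ 1}

/-- The Hilbert distance with respect to the body `K`. -/
def hilbertDist {d : ℕ} (K : Set (Euc d)) (x y : Euc d) : ℝ :=
  -(1 / 2) * Real.log ((1 - gauge ((fun k => k - x) '' K) (y - x)) *
    (1 - gauge ((fun k => k - y) '' K) (x - y)))

/-- The Hilbert ball of radius `r` centered at `x`. -/
def hilbertBall {d : ℕ} (K : Set (Euc d)) (x : Euc d) (r : ℝ) : Set (Euc d) :=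
  {y ∈ interior K | hilbertDist K x y ≤ r}

/-- The Hilbert covering number of `U` at scale `α` in the geometry induced by `K`. -/
def hilbertCov {d : ℕ} (K U : Set (Euc d)) (α : ℝ) : ℕ :=
  sInf {m : ℕ | ∃ x : Fin m → Euc d, (∀ i, x i ∈ interior K) ∧
    U ⊆ ⋃ i, hilbertBall K (x i) α}

/-- The translative covering number of `U` by translates of `α • D`. -/
def transCov {d : ℕ} (D U : Set (Euc d)) (α : ℝ) : ℕ :=
  sInf {m : ℕ | ∃ x : Fin m → Euc d, U ⊆ ⋃ i, x i +ᵥ α • D}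

/-- The Hilbert `α`-expansion of `G` in `K`. -/
def hilbertExpand {d : ℕ} (K G : Set (Euc d)) (α : ℝ) : Set (Euc d) :=
  {x ∈ interior K | sInf (hilbertDist K x '' G) ≤ α}

/-- The Lebesgue volume of the Euclidean unit ball in `ℝ^d`. -/
def ωd (d : ℕ) : ℝ := (volume (ball (0 : Euc d) 1)).toReal

/-- The Hilbert Finsler unit ball at `y` in the geometry induced by `K`. -/
def finslerBall {d : ℕ} (K : Set (Euc d)) (y : Euc d) : Set (Euc d) :=
  {v | gauge ((fun k => k - y) '' K) v + gauge ((fun k => k - y) '' K) (-v) ≤ 2}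

/-- The Hilbert Holmes–Thompson volume of `U` in the geometry induced by `K`. -/
def volH {d : ℕ} (K U : Set (Euc d)) : ℝ :=
  (1 / ωd d) * ∫ y in U, (volume (polarSet (finslerBall K y))).toReal

/-- The recentered Macbeath region `A(x) := (K ∩ (2x − K)) − x`. -/
def macbeathA {d : ℕ} (K : Set (Euc d)) (x : Euc d) : Set (Euc d) :=
  (fun k => k - x) '' (K ∩ ((fun k => (2 : ℝ) • x - k) '' K))

/-! With `Q := ½ (α C° ∩ D°)` one has `Q ⊆ α (C + α D)°`, because `⟪x + α y, z⟫ ≤ ½ + ½` for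
`x ∈ C`, `y ∈ D`, `z ∈ Q`. Each piece `U ∩ (x + α C°)` of an optimal cover of `U` by translates
of `α C°` lies in `D°` and in a translate of `α C°`, so its differences lie in
`2 (α C° ∩ D°) = 4 Q`, and a packing argument covers it by `9 ^ d` translates of `Q`. -/

open Module Topology

theorem mem_vadd_set_iff_sub_mem {E : Type*} [AddCommGroup E] {s : Set E} {p x : E} :
    x ∈ p +ᵥ s ↔ x - p ∈ s := by
  rw [mem_vadd_set_iff_neg_vadd_mem, vadd_eq_add, neg_add_eq_sub]

theorem Convex.sub_mem_two_smul {E : Type*} [AddCommGroup E] [Module ℝ E] {K : Set E}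
    (hK : Convex ℝ K) (hKs : -K = K) {u v : E} (hu : u ∈ K) (hv : v ∈ K) :
    u - v ∈ (2 : ℝ) • K := by
  rw [← one_add_one_eq_two, hK.add_smul zero_le_one zero_le_one, one_smul, sub_eq_add_neg]
  exact add_mem_add hu (by rwa [← Set.mem_neg, hKs])

/-- A `Q`-separated subset of `S` of maximal size is a `Q`-net of `S`. -/
theorem exists_finset_subset_biUnion_vadd_of_card_le {E : Type*} [AddCommGroup E] {Q S : Set E}
    (hQ0 : (0 : E) ∈ Q) (hQs : -Q = Q) {N : ℕ}
    (hN : ∀ P : Finset E, ↑P ⊆ S → (P : Set E).Pairwise (fun p q ↦ p - q ∉ Q) → P.card ≤ N) :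
    ∃ P : Finset E, P.card ≤ N ∧ S ⊆ ⋃ p ∈ P, p +ᵥ Q := by
  classical
  obtain ⟨P, ⟨hPS, hPsep⟩, hmax⟩ := (measure fun P : Finset E ↦ N - P.card).wf.has_min
    {P | ↑P ⊆ S ∧ (P : Set E).Pairwise fun p q ↦ p - q ∉ Q} ⟨∅, by simp⟩
  refine ⟨P, hN P hPS hPsep, fun s hs ↦ ?_⟩
  by_contra hsP
  simp only [mem_iUnion, mem_vadd_set_iff_sub_mem, not_exists] at hsP
  have hsP' : s ∉ P := fun h ↦ hsP s h (by simpa using hQ0)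
  have hsep : ((insert s P : Finset E) : Set E).Pairwise fun p q ↦ p - q ∉ Q := by
    rw [Finset.coe_insert, Set.pairwise_insert]
    refine ⟨hPsep, fun p hp _ ↦ ⟨hsP p hp, fun h ↦ hsP p hp ?_⟩⟩
    rw [← neg_sub, ← hQs]
    exact Set.neg_mem_neg.2 h
  have hsub : ↑(insert s P) ⊆ S := by
    rw [Finset.coe_insert]
    exact Set.insert_subset hs hPS
  refine hmax _ ⟨hsub, hsep⟩ (show N - (insert s P).card < N - P.card from ?_)
  have hcard := hN _ hsub hsep
  rw [Finset.card_insert_of_notMem hsP'] at hcard ⊢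
  omega

theorem exists_fin_subset_iUnion_vadd {E : Type*} [AddCommGroup E] {S K : Set E} (P : Finset E)
    (h : S ⊆ ⋃ p ∈ P, p +ᵥ K) : ∃ x : Fin P.card → E, S ⊆ ⋃ i, x i +ᵥ K := by
  refine ⟨fun i ↦ P.equivFin.symm i, fun s hs ↦ ?_⟩
  obtain ⟨p, hp, hsp⟩ := mem_iUnion₂.1 (h hs)
  exact mem_iUnion.2 ⟨P.equivFin ⟨p, hp⟩, by simpa using hsp⟩

section SymmetricConvexBody

variable {E : Type*} [NormedAddCommGroup E] [NormedSpace ℝ E]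

structure IsSymmetricConvexBody (K : Set E) : Prop where
  convex : Convex ℝ K
  neg_eq : -K = K
  isCompact : IsCompact K
  mem_nhds_zero : K ∈ 𝓝 (0 : E)

namespace IsSymmetricConvexBody

variable {K L : Set E}

theorem smul (hK : IsSymmetricConvexBody K) {c : ℝ} (hc : c ≠ 0) :
    IsSymmetricConvexBody (c • K) where
  convex := hK.convex.smul c
  neg_eq := by rw [← smul_set_neg, hK.neg_eq]
  isCompact := hK.isCompact.smul c
  mem_nhds_zero := (set_smul_mem_nhds_zero_iff hc).2 hK.mem_nhds_zero

theorem inter (hK : IsSymmetricConvexBody K) (hL : IsSymmetricConvexBody L) :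
    IsSymmetricConvexBody (K ∩ L) where
  convex := hK.convex.inter hL.convex
  neg_eq := by rw [Set.inter_neg, hK.neg_eq, hL.neg_eq]
  isCompact := hK.isCompact.inter_right hL.isCompact.isClosed
  mem_nhds_zero := Filter.inter_mem hK.mem_nhds_zero hL.mem_nhds_zero

/-- The translates `p +ᵥ Q / 2` are disjoint and fit into `p₀ +ᵥ (k + 1/2) • Q`; compare
volumes. -/
theorem card_le_of_pairwise_sub_notMem [FiniteDimensional ℝ E] {Q : Set E}
    (hQ : IsSymmetricConvexBody Q) {k : ℕ} {P : Finset E}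
    (hdiam : ∀ p ∈ P, ∀ q ∈ P, p - q ∈ (k : ℝ) • Q)
    (hsep : (P : Set E).Pairwise fun p q ↦ p - q ∉ Q) :
    P.card ≤ (2 * k + 1) ^ finrank ℝ E := by
  borelize E
  obtain rfl | ⟨p₀, hp₀⟩ := P.eq_empty_or_nonempty
  · simp
  set μ : Measure E := Measure.addHaar
  set R := (2⁻¹ : ℝ) • Q
  have hR : IsSymmetricConvexBody R := hQ.smul (by norm_num)
  have hQR : Q = (2 : ℝ) • R := by rw [smul_smul]; norm_num
  have hdisj : (P : Set E).PairwiseDisjoint (· +ᵥ R) := by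
    intro p hp q hq hpq
    refine Set.disjoint_left.2 fun z hzp hzq ↦ hsep hp hq hpq ?_
    rw [mem_vadd_set_iff_sub_mem] at hzp hzq
    rw [hQR, ← sub_sub_sub_cancel_left q p z]
    exact hR.convex.sub_mem_two_smul hR.neg_eq hzq hzp
  have hsub : ⋃ p ∈ P, p +ᵥ R ⊆ p₀ +ᵥ ((2 * k + 1 : ℝ) • R) := by
    refine iUnion₂_subset fun p hp z hz ↦ ?_
    rw [mem_vadd_set_iff_sub_mem] at hz ⊢
    rw [hR.convex.add_smul (by positivity) zero_le_one, one_smul, ← sub_add_sub_cancel' p p₀ z]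
    refine add_mem_add ?_ hz
    rw [mul_comm, ← smul_smul, ← hQR]
    exact hdiam p hp p₀ hp₀
  have hμR : μ R ≠ 0 := (Measure.measure_pos_of_mem_nhds μ hR.mem_nhds_zero).ne'
  have hμR' : μ R ≠ ∞ := hR.isCompact.measure_lt_top.ne
  have hvol : (P.card : ℝ≥0∞) * μ R ≤ ((2 * k + 1) ^ finrank ℝ E : ℕ) * μ R := calc
    (P.card : ℝ≥0∞) * μ R = μ (⋃ p ∈ P, p +ᵥ R) := by
      rw [measure_biUnion_finset hdisj fun p _ ↦ (hR.isCompact.vadd p).isClosed.measurableSet]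
      simp [measure_vadd]
    _ ≤ μ (p₀ +ᵥ ((2 * k + 1 : ℝ) • R)) := measure_mono hsub
    _ = ((2 * k + 1) ^ finrank ℝ E : ℕ) * μ R := by
      rw [measure_vadd, Measure.addHaar_smul_of_nonneg μ (by positivity)]
      norm_cast
  exact_mod_cast (ENNReal.mul_le_mul_iff_left hμR hμR').1 hvol

theorem exists_finset_subset_biUnion_vadd [FiniteDimensional ℝ E] {Q S : Set E}
    (hQ : IsSymmetricConvexBody Q) (k : ℕ) (hS : ∀ s ∈ S, ∀ t ∈ S, s - t ∈ (k : ℝ) • Q) :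
    ∃ P : Finset E, P.card ≤ (2 * k + 1) ^ finrank ℝ E ∧ S ⊆ ⋃ p ∈ P, p +ᵥ Q :=
  exists_finset_subset_biUnion_vadd_of_card_le (mem_of_mem_nhds hQ.mem_nhds_zero) hQ.neg_eq
    fun _ hPS hsep ↦ hQ.card_le_of_pairwise_sub_notMem
      (fun p hp q hq ↦ hS p (hPS hp) q (hPS hq)) hsep

end IsSymmetricConvexBody

end SymmetricConvexBody

section Polar

variable {d : ℕ}

theorem polarSet_eq_biInter (S : Set (Euc d)) : polarSet S = ⋂ x ∈ S, {y | ⟪x, y⟫ ≤ 1} := by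
  ext y; simp [polarSet]

theorem convex_polarSet (S : Set (Euc d)) : Convex ℝ (polarSet S) := by
  rw [polarSet_eq_biInter]
  exact convex_iInter₂ fun x _ ↦ convex_halfSpace_le (innerₛₗ ℝ x).isLinear 1

theorem isClosed_polarSet (S : Set (Euc d)) : IsClosed (polarSet S) := by
  rw [polarSet_eq_biInter]
  exact isClosed_biInter fun x _ ↦
    isClosed_le (continuous_const.inner continuous_id) continuous_const

theorem neg_polarSet (S : Set (Euc d)) : -polarSet S = polarSet (-S) := by
  ext y
  simp only [polarSet, Set.mem_neg, Set.mem_ofPred_eq]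
  refine ⟨fun h x hx ↦ ?_, fun h x hx ↦ ?_⟩
  · simpa using h _ hx
  · simpa using h (-x) (by simpa using hx)

theorem polarSet_mem_nhds_zero {S : Set (Euc d)} (hS : Bornology.IsBounded S) :
    polarSet S ∈ 𝓝 0 := by
  obtain ⟨R, hR, hSR⟩ := hS.subset_closedBall_lt 0 0
  refine Filter.mem_of_superset (ball_mem_nhds 0 (inv_pos.2 hR)) fun y hy x hx ↦ ?_
  rw [mem_ball_zero_iff] at hy
  have hx : ‖x‖ ≤ R := mem_closedBall_zero_iff.1 (hSR hx)
  calc ⟪x, y⟫ ≤ ‖x‖ * ‖y‖ := real_inner_le_norm x y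
    _ ≤ R * R⁻¹ := by gcongr
    _ = 1 := mul_inv_cancel₀ hR.ne'

theorem isBounded_polarSet {S : Set (Euc d)} (hS : S ∈ 𝓝 0) :
    Bornology.IsBounded (polarSet S) := by
  obtain ⟨r, hr, hrS⟩ := nhds_basis_closedBall.mem_iff.1 hS
  refine isBounded_iff_forall_norm_le.2 ⟨r⁻¹, fun y hy ↦ ?_⟩
  rcases eq_or_ne y 0 with rfl | hy0
  · simpa using hr.le
  have hny : 0 < ‖y‖ := norm_pos_iff.2 hy0
  have hx : (r / ‖y‖) • y ∈ S := hrS <| by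
    rw [mem_closedBall_zero_iff, norm_smul, Real.norm_of_nonneg (by positivity),
      div_mul_cancel₀ _ hny.ne']
  have h := hy _ hx
  rw [real_inner_smul_left, real_inner_self_eq_norm_sq,
    show r / ‖y‖ * ‖y‖ ^ 2 = r * ‖y‖ by field_simp] at h
  rw [← one_div, le_div_iff₀ hr]
  linarith

theorem half_smul_inter_polarSet_subset_smul_polarSet_add (C D : Set (Euc d)) (α : ℝ) :
    (2⁻¹ : ℝ) • (α • polarSet C ∩ polarSet D) ⊆ α • polarSet (C + α • D) := by
  rintro _ ⟨_, ⟨⟨u, hu, rfl⟩, hv⟩, rfl⟩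
  dsimp only at hv ⊢
  rw [smul_comm]
  refine Set.smul_mem_smul_set ?_
  rintro _ ⟨x, hx, _, ⟨y, hy, rfl⟩, rfl⟩
  calc ⟪x + α • y, (2⁻¹ : ℝ) • u⟫ = 2⁻¹ * (⟪x, u⟫ + ⟪y, α • u⟫) := by
        rw [inner_add_left, real_inner_smul_left, real_inner_smul_right, real_inner_smul_right,
          real_inner_smul_right]
        ring
    _ ≤ 2⁻¹ * (1 + 1) := by gcongr; exacts [hu x hx, hv y hy]
    _ = 1 := by norm_num

theorem IsConvexBody.isSymmetricConvexBody {C : Set (Euc d)} (hC : IsConvexBody C)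
    (hCs : C = -C) : IsSymmetricConvexBody C where
  convex := hC.2.1
  neg_eq := hCs.symm
  isCompact := hC.1
  mem_nhds_zero := by
    obtain ⟨-, hconv, x, hx⟩ := hC
    have hnx : -x ∈ interior C :=
      interior_maximal (fun y hy ↦ by rw [hCs]; exact interior_subset (s := C) hy)
        isOpen_interior.neg (Set.neg_mem_neg.2 hx)
    have h0 := hconv.interior hx hnx (by norm_num : (0 : ℝ) ≤ 2⁻¹) (by norm_num : (0 : ℝ) ≤ 2⁻¹)
      (by norm_num)
    rw [smul_neg, add_neg_cancel] at h0
    exact mem_interior_iff_mem_nhds.1 h0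

theorem IsSymmetricConvexBody.polarSet {C : Set (Euc d)} (hC : IsSymmetricConvexBody C) :
    IsSymmetricConvexBody (polarSet C) where
  convex := convex_polarSet C
  neg_eq := by rw [neg_polarSet, hC.neg_eq]
  isCompact := isCompact_of_isClosed_isBounded (isClosed_polarSet C)
    (isBounded_polarSet hC.mem_nhds_zero)
  mem_nhds_zero := polarSet_mem_nhds_zero hC.isCompact.isBounded

end Polar

section TranslativeCovering

variable {d : ℕ} {A U : Set (Euc d)} {α : ℝ}

theorem transCov_le_card (P : Finset (Euc d)) (h : U ⊆ ⋃ p ∈ P, p +ᵥ α • A) :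
    transCov A U α ≤ P.card :=
  Nat.sInf_le (exists_fin_subset_iUnion_vadd P h)

theorem exists_fin_transCov_subset_iUnion_vadd (hU : TotallyBounded U) (hA : α • A ∈ 𝓝 0) :
    ∃ x : Fin (transCov A U α) → Euc d, U ⊆ ⋃ i, x i +ᵥ α • A := by
  obtain ⟨t, ht, hUt⟩ := totallyBounded_iff_subset_finite_iUnion_nhds_zero.1 hU _ hA
  show transCov A U α ∈ {m : ℕ | ∃ x : Fin m → Euc d, U ⊆ ⋃ i, x i +ᵥ α • A}
  exact Nat.sInf_mem ⟨_, exists_fin_subset_iUnion_vadd ht.toFinset (by simpa using hUt)⟩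

theorem transCov_le_mul {B K V : Set (Euc d)} {m N : ℕ} (x : Fin m → Euc d)
    (hx : U ⊆ ⋃ i, x i +ᵥ V) (hK : K ⊆ α • B)
    (hpieces : ∀ i, ∃ P : Finset (Euc d), P.card ≤ N ∧ U ∩ (x i +ᵥ V) ⊆ ⋃ p ∈ P, p +ᵥ K) :
    transCov B U α ≤ m * N := by
  classical
  choose P hPcard hP using hpieces
  have hcover : U ⊆ ⋃ p ∈ Finset.univ.biUnion P, p +ᵥ α • B := by
    intro u hu
    obtain ⟨i, hi⟩ := mem_iUnion.1 (hx hu)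
    obtain ⟨p, hp, hup⟩ := mem_iUnion₂.1 (hP i ⟨hu, hi⟩)
    exact mem_iUnion₂.2 ⟨p, Finset.mem_biUnion.2 ⟨i, Finset.mem_univ _, hp⟩,
      Set.vadd_set_mono hK hup⟩
  calc transCov B U α ≤ (Finset.univ.biUnion P).card := transCov_le_card _ hcover
    _ ≤ ∑ i, (P i).card := Finset.card_biUnion_le
    _ ≤ ∑ _i : Fin m, N := Finset.sum_le_sum fun i _ ↦ hPcard i
    _ = m * N := by simp

end TranslativeCovering

/-- Covering stability under polarity and Minkowski expansion. -/
theorem mink_polar_expansion_cover :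
    ∃ c : ℝ, 1 ≤ c ∧ ∀ d : ℕ, 2 ≤ d →
      ∀ C D : Set (Euc d), IsConvexBody C → IsConvexBody D →
        C = -C → D = -D →
        ∀ α : ℝ, 0 < α → ∀ U : Set (Euc d), U ⊆ polarSet D →
          (transCov (polarSet (C + α • D)) U α : ℝ) ≤
            c ^ d * (transCov (polarSet C) U α : ℝ) := by
  refine ⟨9, by norm_num, fun d _ C D hC hD hCs hDs α hα U hU ↦ ?_⟩
  have hαCpol := ((hC.isSymmetricConvexBody hCs).polarSet).smul hα.ne'
  have hDpol := (hD.isSymmetricConvexBody hDs).polarSet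
  set Q : Set (Euc d) := (2⁻¹ : ℝ) • (α • polarSet C ∩ polarSet D) with hQ_def
  have hQ : IsSymmetricConvexBody Q := (hαCpol.inter hDpol).smul (by norm_num)
  obtain ⟨x, hx⟩ := exists_fin_transCov_subset_iUnion_vadd
    (hDpol.isCompact.totallyBounded.subset hU) hαCpol.mem_nhds_zero
  -- each piece has diameter `2` in both `α • C°` and `D°`, i.e. `4` in `Q`
  have hdiam (i) : ∀ s ∈ U ∩ (x i +ᵥ α • polarSet C), ∀ t ∈ U ∩ (x i +ᵥ α • polarSet C),
      s - t ∈ ((4 : ℕ) : ℝ) • Q := by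
    rintro s ⟨hsU, hsC⟩ t ⟨htU, htC⟩
    rw [mem_vadd_set_iff_sub_mem] at hsC htC
    rw [hQ_def, Nat.cast_ofNat, smul_smul, show (4 : ℝ) * 2⁻¹ = 2 by norm_num,
      Set.smul_set_inter₀ two_ne_zero]
    refine ⟨?_, hDpol.convex.sub_mem_two_smul hDpol.neg_eq (hU hsU) (hU htU)⟩
    rw [← sub_sub_sub_cancel_right s t (x i)]
    exact hαCpol.convex.sub_mem_two_smul hαCpol.neg_eq hsC htC
  have hpieces (i) : ∃ P : Finset (Euc d), P.card ≤ 9 ^ d ∧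
      U ∩ (x i +ᵥ α • polarSet C) ⊆ ⋃ p ∈ P, p +ᵥ Q := by
    simpa [finrank_euclideanSpace_fin] using hQ.exists_finset_subset_biUnion_vadd 4 (hdiam i)
  have := transCov_le_mul x hx (half_smul_inter_polarSet_subset_smul_polarSet_add C D α) hpieces
  rw [mul_comm]
  exact_mod_cast this
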